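/- arXiv:1812.04260 — 2 statements merged into one kernel-verified Lean document; each statement's English description precedes it below -/
import Mathlib

section
/- Let I ⊆ [0,1] be a set of real numbers and let c ≥ 0 be a real number. Then D(D(I) ∪ D_c(I)) ⊆ D(I) ∪ D_c(I) ∪ {1}. -/
open Finset in
/-- `I_+`: sums `∑ nᵢ aᵢ ≤ 1` with `aᵢ ∈ I`, `nᵢ` positive integers, together with `0`. -/
def Iplus (I : Set ℝ) : Set ℝ :=
  {x : ℝ | x ≤ 1 ∧ ∃ (r : ℕ), 0 < r ∧ ∃ (a : Fin r → ℝ) (n : Fin r → ℕ),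
    (∀ i, a i ∈ I) ∧ (∀ i, 0 < n i) ∧ x = ∑ i, (n i : ℝ) * a i} ∪ {0}

/-- `D(I) = {(m-1+f)/m ≤ 1 : m ∈ ℕ₊, f ∈ I_+}`. -/
def Dset (I : Set ℝ) : Set ℝ :=
  {x : ℝ | ∃ (m : ℕ) (f : ℝ), 0 < m ∧ f ∈ Iplus I ∧ x = ((m : ℝ) - 1 + f) / m} ∩ Set.Iic 1

/-- `D_c(I) = {(m-1+f+kc)/m ≤ 1 : m, k ∈ ℕ₊, f ∈ I_+}`. -/
def Dc (c : ℝ) (I : Set ℝ) : Set ℝ :=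
  {x : ℝ | ∃ (m k : ℕ) (f : ℝ), 0 < m ∧ 0 < k ∧ f ∈ Iplus I ∧
    x = ((m : ℝ) - 1 + f + (k : ℝ) * c) / m} ∩ Set.Iic 1

/-!
Every element of `D(I) ∪ D_c(I)` has the shape `(m - 1 + F + K c) / m` with `F` a sum of
elements of `I` and `K ≥ 0`. Adding a term with `m = 1`, i.e. `F' + K' c`, to such a number
keeps the shape, while two terms with `m ≥ 2` are each at least `1/2`. Hence a sum of elements
of `D(I) ∪ D_c(I)` is either of that shape or at least `1`, and `(m - 1 + f) / m` with
`f = (m' - 1 + F + K c) / m'` equals `(m m' - 1 + F + K c) / (m m')`.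
-/

lemma Iplus_eq_closure_inter_Iic (I : Set ℝ) :
    Iplus I = ↑(AddSubmonoid.closure I) ∩ Set.Iic 1 := by
  ext x
  constructor
  · rintro (⟨hx1, r, -, a, n, ha, -, rfl⟩ | rfl)
    · refine ⟨AddSubmonoid.sum_mem _ fun i _ => ?_, hx1⟩
      rw [← nsmul_eq_mul]
      exact nsmul_mem (AddSubmonoid.subset_closure (ha i)) (n i)
    · exact ⟨zero_mem _, Set.mem_Iic.mpr zero_le_one⟩
  · rintro ⟨hx, hx1⟩
    obtain ⟨l, hl, rfl⟩ := AddSubmonoid.exists_list_of_mem_closure hx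
    rcases eq_or_ne l [] with rfl | hne
    · exact Or.inr rfl
    · refine Or.inl ⟨hx1, l.length, List.length_pos_iff.mpr hne, fun i => l[(i : ℕ)],
        fun _ => 1, fun i => hl _ (l.getElem_mem i.2), fun _ => one_pos, ?_⟩
      simp

lemma nonneg_of_mem_closure {M : Type*} [AddCommMonoid M] [PartialOrder M]
    [IsOrderedAddMonoid M] {s : Set M} (hs : s ⊆ Set.Ici 0) {x : M}
    (hx : x ∈ AddSubmonoid.closure s) : 0 ≤ x :=
  (AddSubmonoid.closure_le (S := AddSubmonoid.nonneg M)).mpr hs hx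

/-- `D_c(I)` with `k = 0` allowed, `f` in the additive closure of `I`, and no bound `≤ 1`. -/
def DcExt (c : ℝ) (I : Set ℝ) : Set ℝ :=
  {x | ∃ (m K : ℕ) (F : ℝ), 0 < m ∧ F ∈ AddSubmonoid.closure I ∧
    x = ((m : ℝ) - 1 + F + K * c) / m}

section DcExt

variable {c : ℝ} {I : Set ℝ}

lemma Dset_union_Dc_subset_DcExt : Dset I ∪ Dc c I ⊆ DcExt c I := by
  rintro x (⟨⟨m, f, hm, hf, rfl⟩, -⟩ | ⟨⟨m, k, f, hm, -, hf, rfl⟩, -⟩) <;>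
    rw [Iplus_eq_closure_inter_Iic] at hf
  · exact ⟨m, 0, f, hm, hf.1, by simp⟩
  · exact ⟨m, k, f, hm, hf.1, rfl⟩

lemma zero_mem_DcExt : (0 : ℝ) ∈ DcExt c I :=
  ⟨1, 0, 0, one_pos, zero_mem _, by simp⟩

lemma DcExt_subset_Ici (hI : I ⊆ Set.Ici 0) (hc : 0 ≤ c) : DcExt c I ⊆ Set.Ici 0 := by
  rintro x ⟨m, K, F, hm, hF, rfl⟩
  have hm1 : (1 : ℝ) ≤ m := by exact_mod_cast hm
  have hF0 := nonneg_of_mem_closure hI hF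
  have hKc : 0 ≤ (K : ℝ) * c := by positivity
  exact Set.mem_Ici.mpr (div_nonneg (by linarith) (by linarith))

lemma add_mem_DcExt {x F : ℝ} (hx : x ∈ DcExt c I) (hF : F ∈ AddSubmonoid.closure I)
    (K : ℕ) :
    x + (F + K * c) ∈ DcExt c I := by
  obtain ⟨m, K', F', hm, hF', rfl⟩ := hx
  refine ⟨m, K' + m * K, F' + m • F, hm, add_mem hF' (nsmul_mem hF m), ?_⟩
  have hm0 : (m : ℝ) ≠ 0 := by positivity
  rw [nsmul_eq_mul]
  field_simp
  push_cast
  ring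

lemma one_half_le_of_two_le (hI : I ⊆ Set.Ici 0) (hc : 0 ≤ c) {m K : ℕ} {F : ℝ}
    (hm : 2 ≤ m) (hF : F ∈ AddSubmonoid.closure I) :
    1 / 2 ≤ ((m : ℝ) - 1 + F + K * c) / m := by
  have hm2 : (2 : ℝ) ≤ m := by exact_mod_cast hm
  have hF0 := nonneg_of_mem_closure hI hF
  have hKc : 0 ≤ (K : ℝ) * c := by positivity
  rw [div_le_div_iff₀ two_pos (by linarith)]
  linarith

lemma add_mem_DcExt_or_one_le (hI : I ⊆ Set.Ici 0) (hc : 0 ≤ c) {x y : ℝ}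
    (hx : x ∈ DcExt c I) (hy : y ∈ DcExt c I) : x + y ∈ DcExt c I ∨ 1 ≤ x + y := by
  obtain ⟨m₁, K₁, F₁, hm₁, hF₁, rfl⟩ := hx
  obtain ⟨m₂, K₂, F₂, hm₂, hF₂, rfl⟩ := hy
  by_cases h₁ : m₁ = 1
  · subst h₁
    rw [add_comm]
    exact Or.inl (by simpa using add_mem_DcExt ⟨m₂, K₂, F₂, hm₂, hF₂, rfl⟩ hF₁ K₁)
  by_cases h₂ : m₂ = 1
  · subst h₂
    exact Or.inl (by simpa using add_mem_DcExt ⟨m₁, K₁, F₁, hm₁, hF₁, rfl⟩ hF₂ K₂)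
  have e₁ := one_half_le_of_two_le (m := m₁) (K := K₁) hI hc (by omega) hF₁
  have e₂ := one_half_le_of_two_le (m := m₂) (K := K₂) hI hc (by omega) hF₂
  exact Or.inr (by linarith)

lemma mem_DcExt_or_one_le_of_mem_closure (hI : I ⊆ Set.Ici 0) (hc : 0 ≤ c) {f : ℝ}
    (hf : f ∈ AddSubmonoid.closure (DcExt c I)) : f ∈ DcExt c I ∨ 1 ≤ f := by
  have hDc := DcExt_subset_Ici hI hc
  induction hf using AddSubmonoid.closure_induction with
  | mem y hy => exact Or.inl hy
  | zero => exact Or.inl zero_mem_DcExt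
  | add a b ha hb iha ihb =>
    rcases iha with iha | iha
    · rcases ihb with ihb | ihb
      · exact add_mem_DcExt_or_one_le hI hc iha ihb
      · exact Or.inr (by linarith [nonneg_of_mem_closure hDc ha])
    · exact Or.inr (by linarith [nonneg_of_mem_closure hDc hb])

lemma sub_one_add_div_mem_DcExt {m : ℕ} (hm : 0 < m) {f : ℝ} (hf : f ∈ DcExt c I) :
    ((m : ℝ) - 1 + f) / m ∈ DcExt c I := by
  obtain ⟨m', K, F, hm', hF, rfl⟩ := hf
  refine ⟨m * m', K, F, Nat.mul_pos hm hm', hF, ?_⟩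
  have hm0 : (m : ℝ) ≠ 0 := by positivity
  have hm'0 : (m' : ℝ) ≠ 0 := by positivity
  push_cast
  field_simp
  ring

lemma DcExt_inter_Iic_subset (hc : 0 ≤ c) :
    DcExt c I ∩ Set.Iic 1 ⊆ Dset I ∪ Dc c I := by
  rintro x ⟨⟨m, K, F, hm, hF, rfl⟩, hx1⟩
  have hm0 : (0 : ℝ) < m := by exact_mod_cast hm
  have hKc : 0 ≤ (K : ℝ) * c := by positivity
  have hFI : F ∈ Iplus I := by
    rw [Iplus_eq_closure_inter_Iic]
    refine ⟨hF, ?_⟩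
    rw [Set.mem_Iic, div_le_one hm0] at hx1
    show F ≤ 1
    linarith
  rcases Nat.eq_zero_or_pos K with rfl | hK
  · exact Or.inl ⟨⟨m, F, hm, hFI, by simp⟩, hx1⟩
  · exact Or.inr ⟨⟨m, K, F, hm, hK, hFI, rfl⟩, hx1⟩

end DcExt

theorem D_of_union (I : Set ℝ) (hI : I ⊆ Set.Icc 0 1) (c : ℝ) (hc : 0 ≤ c) :
    Dset (Dset I ∪ Dc c I) ⊆ Dset I ∪ Dc c I ∪ {1} := by
  have hI0 : I ⊆ Set.Ici 0 := hI.trans Set.Icc_subset_Ici_self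
  rintro x ⟨⟨m, f, hm, hf, rfl⟩, hx1⟩
  rw [Iplus_eq_closure_inter_Iic] at hf
  obtain ⟨hf, hf1⟩ := hf
  have hf := AddSubmonoid.closure_mono Dset_union_Dc_subset_DcExt hf
  rcases mem_DcExt_or_one_le_of_mem_closure hI0 hc hf with hf' | hf'
  · exact Or.inl (DcExt_inter_Iic_subset hc ⟨sub_one_add_div_mem_DcExt hm hf', hx1⟩)
  · have hm0 : (m : ℝ) ≠ 0 := by positivity
    rw [le_antisymm hf1 hf', sub_add_cancel, div_self hm0]
    exact Or.inr rfl
end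

section
/- Let I ⊆ [0,1] be a set of real numbers satisfying the descending chain condition and let c ≥ 0 be a real number. Then D_c(I) satisfies the descending chain condition. -/
/-- A set of reals satisfies the descending chain condition (DCC) if it contains
no infinite strictly decreasing sequence. -/
def DCC (S : Set ℝ) : Prop := ¬ ∃ f : ℕ → ℝ, (∀ n, f n ∈ S) ∧ StrictAnti f

lemma Iplus_subset_closure (I : Set ℝ) :
    Iplus I ⊆ (AddSubmonoid.closure I : Set ℝ) := by
  rintro x (⟨hx1, r, hr, a, n, ha, hn, rfl⟩ | hx)
  · exact AddSubmonoid.sum_mem _ fun i _ => by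
      simpa [nsmul_eq_mul] using
        AddSubmonoid.nsmul_mem _ (AddSubmonoid.subset_closure (ha i)) (n i)
  · simp only [Set.mem_singleton_iff] at hx
    subst hx; exact zero_mem _

lemma Iplus_nonneg {I : Set ℝ} (hI : I ⊆ Set.Icc 0 1) :
    ∀ f ∈ Iplus I, 0 ≤ f := by
  rintro f (⟨hf1, r, hr, a, n, ha, hn, rfl⟩ | hf)
  · exact Finset.sum_nonneg fun i _ =>
      mul_nonneg (Nat.cast_nonneg _) (hI (ha i)).1
  · simp only [Set.mem_singleton_iff] at hf
    simp [hf]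


open Pointwise in
theorem Dc_DCC (I : Set ℝ) (hI : I ⊆ Set.Icc 0 1) (hDCC : DCC I)
    (c : ℝ) (hc : 0 ≤ c) : DCC (Dc c I) := by
  classical
  have hIwf : I.IsWF := by
    rw [Set.isWF_iff_no_descending_seq]
    intro f hf hmem
    exact hDCC ⟨f, fun n => hmem n, hf⟩
  have hclI : (AddSubmonoid.closure I : Set ℝ).IsPWO :=
    hIwf.isPWO.addSubmonoid_closure (fun x hx => (hI hx).1)
  have hclc : (AddSubmonoid.closure {c} : Set ℝ).IsPWO :=
    (Set.finite_singleton c).isPWO.addSubmonoid_closure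
      (by rintro x rfl; exact hc)
  set T : Set ℝ := (AddSubmonoid.closure I : Set ℝ) + (AddSubmonoid.closure {c} : Set ℝ)
    with hTdef
  have hTwf : T.IsWF := (hclI.add hclc).isWF
  rw [Set.isWF_iff_no_descending_seq] at hTwf
  rintro ⟨x, hmem, hanti⟩
  choose m k f hm hk hf hx using fun n => (hmem n).1
  have hle : ∀ n, x n ≤ 1 := fun n => (hmem n).2
  set g : ℕ → ℝ := fun n => f n + (k n : ℝ) * c with hgdef
  have hgT : ∀ n, g n ∈ T := by
    intro n
    refine Set.add_mem_add (Iplus_subset_closure I (hf n)) ?_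
    simpa [nsmul_eq_mul] using
      AddSubmonoid.nsmul_mem _ (AddSubmonoid.subset_closure (Set.mem_singleton c)) (k n)
  have hmpos : ∀ n, (0:ℝ) < m n := fun n => by exact_mod_cast hm n
  have hkey : ∀ n, (m n : ℝ) * x n = (m n : ℝ) - 1 + g n := by
    intro n
    rw [hx n, hgdef]
    field_simp [(hmpos n).ne']
    ring
  have hg0 : ∀ n, 0 ≤ g n := fun n =>
    add_nonneg (Iplus_nonneg hI _ (hf n)) (mul_nonneg (Nat.cast_nonneg _) hc)
  -- bound on m for n ≥ 1
  have hx1 : x 1 < 1 := lt_of_lt_of_le (hanti (by norm_num : (0:ℕ) < 1)) (hle 0)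
  set ε : ℝ := 1 - x 1 with hε
  have hεpos : 0 < ε := by simp [hε]; linarith
  have hbound : ∀ n : ℕ, (m (n+1) : ℝ) ≤ 1 / ε := by
    intro n
    have h1 : x (n+1) ≤ x 1 := hanti.antitone (by omega)
    have h2 : (m (n+1) : ℝ) * (1 - x (n+1)) = 1 - g (n+1) := by
      have := hkey (n+1); ring_nf; ring_nf at this; linarith
    have h3 : (m (n+1) : ℝ) * ε ≤ 1 := by
      have : (m (n+1) : ℝ) * ε ≤ (m (n+1) : ℝ) * (1 - x (n+1)) := by
        apply mul_le_mul_of_nonneg_left _ (le_of_lt (hmpos _))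
        simp [hε]; linarith
      have h4 := hg0 (n+1)
      linarith
    rw [le_div_iff₀ hεpos]
    exact h3
  set B : ℕ := ⌈1 / ε⌉₊ with hB
  have hmB : ∀ n : ℕ, m (n+1) < B + 1 := by
    intro n
    have : (m (n+1) : ℝ) ≤ B := (hbound n).trans (Nat.le_ceil _)
    exact_mod_cast Nat.lt_succ_of_le (by exact_mod_cast this)
  set ψ : ℕ → Fin (B+1) := fun n => ⟨m (n+1), hmB n⟩ with hψ
  obtain ⟨b, hb⟩ := Finite.exists_infinite_fiber ψ
  haveI : Infinite (ψ ⁻¹' {b} : Set ℕ) := hb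
  set φ := Nat.orderEmbeddingOfSet (ψ ⁻¹' {b}) with hφdef
  have hφmem : ∀ j, φ j ∈ ψ ⁻¹' {b} := by
    intro j
    have : φ j ∈ Set.range φ := Set.mem_range_self j
    rwa [Nat.orderEmbeddingOfSet_range] at this
  have hφm : ∀ j, m (φ j + 1) = (b : ℕ) := by
    intro j
    have := hφmem j
    simpa [hψ, Fin.ext_iff] using this
  have hbpos : (0:ℝ) < (b : ℕ) := by
    rw [← hφm 0]; exact hmpos _
  refine hTwf (fun j => g (φ j + 1)) ?_ (fun j => hgT _)
  intro i j hij
  have h1 : x (φ j + 1) < x (φ i + 1) := hanti (by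
    have := φ.strictMono hij; omega)
  have h2 := hkey (φ i + 1)
  have h3 := hkey (φ j + 1)
  rw [hφm i] at h2
  rw [hφm j] at h3
  nlinarith
end
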